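/- Let V1 = (1,b1,c1,d1), V2 = (0,b2,c2,0), V3 = (1,b1,c1,d3) in se(2) × R with d1 ≠ d3 and b2² + c2² ≠ 0 (a T3-system). For (θ,x,y,z) ∈ SE(2) × R define [α;β] = (1/(b2²+c2²))·[[b2,c2],[−c2,b2]]·([x;y] − [[−c1,b1],[b1,c1]]·[1−cos θ; sin θ]), ρ = √(α²+β²), t2 = (z − d1θ)/(d3 − d1), t1 = atan2(β,α) − t2, t3 = ρ, t4 = θ − atan2(β,α). Then exp(t1V1)exp(t2V3)exp(t3V2)exp(t4V1) = (θ,x,y,z). Hence this inverse-kinematics map is a global right inverse of FK^(1,3,2,1). -/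

import Mathlib

open Matrix Real

def eθ : Matrix (Fin 3) (Fin 3) ℝ := !![0,-1,0;1,0,0;0,0,0]
def ex : Matrix (Fin 3) (Fin 3) ℝ := !![0,0,1;0,0,0;0,0,0]
def ey : Matrix (Fin 3) (Fin 3) ℝ := !![0,0,0;0,0,1;0,0,0]

def se2 (a b c : ℝ) : Matrix (Fin 3) (Fin 3) ℝ := a • eθ + b • ex + c • ey

noncomputable def gSE2 (θ x y : ℝ) : Matrix (Fin 3) (Fin 3) ℝ :=
  !![cos θ, -sin θ, x; sin θ, cos θ, y; 0, 0, 1]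

/-- atan2(β,α): the angle of the point (α,β), with atan2 of (0,0) equal to 0. -/
noncomputable def ang (α β : ℝ) : ℝ := Complex.arg (α + β * Complex.I)

set_option linter.unusedVariables false in
lemma zero_fin_three : (0 : Matrix (Fin 3) (Fin 3) ℝ) = !![0,0,0;0,0,0;0,0,0] := by
  ext i j; fin_cases i <;> fin_cases j <;> rfl

lemma add_fin_three (a₁₁ a₁₂ a₁₃ a₂₁ a₂₂ a₂₃ a₃₁ a₃₂ a₃₃ b₁₁ b₁₂ b₁₃ b₂₁ b₂₂ b₂₃ b₃₁ b₃₂ b₃₃ : ℝ) :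
    !![a₁₁,a₁₂,a₁₃;a₂₁,a₂₂,a₂₃;a₃₁,a₃₂,a₃₃] + !![b₁₁,b₁₂,b₁₃;b₂₁,b₂₂,b₂₃;b₃₁,b₃₂,b₃₃]
      = !![a₁₁+b₁₁,a₁₂+b₁₂,a₁₃+b₁₃;a₂₁+b₂₁,a₂₂+b₂₂,a₂₃+b₂₃;a₃₁+b₃₁,a₃₂+b₃₂,a₃₃+b₃₃] := by
  ext i j; fin_cases i <;> fin_cases j <;> rfl

lemma smul_fin_three (t a₁₁ a₁₂ a₁₃ a₂₁ a₂₂ a₂₃ a₃₁ a₃₂ a₃₃ : ℝ) :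
    t • !![a₁₁,a₁₂,a₁₃;a₂₁,a₂₂,a₂₃;a₃₁,a₃₂,a₃₃]
      = !![t*a₁₁,t*a₁₂,t*a₁₃;t*a₂₁,t*a₂₂,t*a₂₃;t*a₃₁,t*a₃₂,t*a₃₃] := by
  ext i j; fin_cases i <;> fin_cases j <;> rfl

noncomputable def φ : (ℂ × ℝ) →ₐ[ℝ] Matrix (Fin 3) (Fin 3) ℝ where
  toFun p := !![p.1.re, -p.1.im, 0; p.1.im, p.1.re, 0; 0, 0, p.2]
  map_one' := by simp [Matrix.one_fin_three]
  map_mul' p q := by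
    simp only [Prod.fst_mul, Prod.snd_mul, Matrix.mul_fin_three, Complex.mul_re, Complex.mul_im]
    congr 1 <;> ring
  map_zero' := by simp [zero_fin_three]
  map_add' p q := by
    simp only [Prod.fst_add, Prod.snd_add, Complex.add_re, Complex.add_im, add_fin_three]
    congr 1 <;> ring
  commutes' r := by
    show !![(algebraMap ℝ ℂ r).re, -(algebraMap ℝ ℂ r).im, 0;
        (algebraMap ℝ ℂ r).im, (algebraMap ℝ ℂ r).re, 0; 0, 0, algebraMap ℝ ℝ r]
      = algebraMap ℝ _ r
    rw [Algebra.algebraMap_eq_smul_one (A := Matrix (Fin 3) (Fin 3) ℝ), Matrix.one_fin_three,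
      smul_fin_three]
    norm_num

lemma φcont : Continuous φ := by
  apply continuous_matrix
  intro i j
  fin_cases i <;> fin_cases j <;> simp [φ] <;> fun_prop

lemma exp_teθ (t : ℝ) : NormedSpace.exp (t • eθ) = !![cos t, -sin t, 0; sin t, cos t, 0; 0,0,1] := by
  letI : SeminormedRing (Matrix (Fin 3) (Fin 3) ℝ) := Matrix.linftyOpSemiNormedRing
  letI : NormedRing (Matrix (Fin 3) (Fin 3) ℝ) := Matrix.linftyOpNormedRing
  letI : NormedAlgebra ℝ (Matrix (Fin 3) (Fin 3) ℝ) := Matrix.linftyOpNormedAlgebra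
  have h1 : t • eθ = φ (t * Complex.I, 0) := by
    show _ = !![(t*Complex.I).re, -(t*Complex.I).im, 0; (t*Complex.I).im, (t*Complex.I).re, 0; 0,0,(0:ℝ)]
    rw [eθ, smul_fin_three]
    norm_num [Complex.mul_re, Complex.mul_im]
  rw [h1]
  erw [← NormedSpace.map_exp φ φcont]
  have h2 : NormedSpace.exp ((t * Complex.I, 0) : ℂ × ℝ) = (Complex.exp (t * Complex.I), 1) := by
    ext
    · rw [Prod.fst_exp]
      rw [← Complex.exp_eq_exp_ℂ]
    · rw [Prod.snd_exp]
      simp [NormedSpace.exp_zero]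
  rw [h2]
  show !![(Complex.exp (t*Complex.I)).re, -(Complex.exp (t*Complex.I)).im, 0;
      (Complex.exp (t*Complex.I)).im, (Complex.exp (t*Complex.I)).re, 0; 0,0,(1:ℝ)] = _
  rw [Complex.exp_mul_I]
  congr 1 <;> simp [Complex.cos_ofReal_re, Complex.sin_ofReal_re]

lemma se2_eq (a b c : ℝ) : se2 a b c = !![0,-a,b;a,0,c;0,0,0] := by
  rw [se2, eθ, ex, ey, smul_fin_three, smul_fin_three, smul_fin_three, add_fin_three,
    add_fin_three]
  norm_num

noncomputable def trU (b c : ℝ) : (Matrix (Fin 3) (Fin 3) ℝ)ˣ where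
  val := !![1,0,-c;0,1,b;0,0,1]
  inv := !![1,0,c;0,1,-b;0,0,1]
  val_inv := by rw [Matrix.mul_fin_three, Matrix.one_fin_three]; norm_num
  inv_val := by rw [Matrix.mul_fin_three, Matrix.one_fin_three]; norm_num

lemma exp_rot (b c t : ℝ) : NormedSpace.exp (t • se2 1 b c)
    = gSE2 t (b * sin t + c * (cos t - 1)) (b * (1 - cos t) + c * sin t) := by
  have h1 : t • se2 1 b c = (trU b c : Matrix (Fin 3) (Fin 3) ℝ) * (t • eθ) *
      ((((trU b c)⁻¹ : (Matrix (Fin 3) (Fin 3) ℝ)ˣ)) : Matrix (Fin 3) (Fin 3) ℝ) := by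
    show _ = (trU b c).val * _ * (trU b c).inv
    rw [se2_eq, eθ, trU, smul_fin_three, smul_fin_three, Matrix.mul_fin_three,
      Matrix.mul_fin_three]
    congr 1 <;> ring
  rw [h1, Matrix.exp_units_conj, exp_teθ]
  show (trU b c).val * _ * (trU b c).inv = _
  rw [trU, gSE2, Matrix.mul_fin_three, Matrix.mul_fin_three]
  congr 1 <;> ring

lemma exp_trans (b c t : ℝ) : NormedSpace.exp (t • se2 0 b c) = !![1,0,t*b;0,1,t*c;0,0,1] := by
  letI : SeminormedRing (Matrix (Fin 3) (Fin 3) ℝ) := Matrix.linftyOpSemiNormedRing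
  letI : NormedRing (Matrix (Fin 3) (Fin 3) ℝ) := Matrix.linftyOpNormedRing
  letI : NormedAlgebra ℝ (Matrix (Fin 3) (Fin 3) ℝ) := Matrix.linftyOpNormedAlgebra
  have hsq : (t • se2 0 b c) ^ 2 = 0 := by
    rw [se2_eq, smul_fin_three, pow_two, Matrix.mul_fin_three, zero_fin_three]
    norm_num
  rw [NormedSpace.exp_eq_tsum ℝ]
  beta_reduce
  rw [tsum_eq_sum (s := Finset.range 2) (by
    intro n hn
    have h2 : 2 ≤ n := by simp at hn; omega
    rw [show n = 2 + (n - 2) by omega, pow_add, hsq, zero_mul, smul_zero])]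
  rw [Finset.sum_range_succ, Finset.sum_range_one]
  rw [se2_eq, smul_fin_three]
  norm_num
  rw [Matrix.one_fin_three, add_fin_three]
  norm_num

lemma polar (α β : ℝ) : Real.sqrt (α ^ 2 + β ^ 2) * cos (ang α β) = α ∧
    Real.sqrt (α ^ 2 + β ^ 2) * sin (ang α β) = β := by
  set z : ℂ := α + β * Complex.I with hz
  have hre : z.re = α := by simp [hz]
  have him : z.im = β := by simp [hz]
  have habs : ‖z‖ = Real.sqrt (α ^ 2 + β ^ 2) := by
    rw [Complex.norm_def, Complex.normSq_apply, hre, him]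
    ring_nf
  by_cases h0 : z = 0
  · have hα : α = 0 := by rw [← hre, h0]; simp
    have hβ : β = 0 := by rw [← him, h0]; simp
    simp [hα, hβ]
  · have hne : ‖z‖ ≠ 0 := by simpa using h0
    constructor
    · rw [ang, ← hz, Complex.cos_arg h0, ← habs, hre]
      rw [← mul_div_assoc]; exact mul_div_cancel_left₀ α hne
    · rw [ang, ← hz, Complex.sin_arg, ← habs, him]
      rw [← mul_div_assoc]; exact mul_div_cancel_left₀ β hne

lemma FK (b1 c1 b2 c2 t1 t2 t3 t4 : ℝ) :
    NormedSpace.exp (t1 • se2 1 b1 c1) * NormedSpace.exp (t2 • se2 1 b1 c1) *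
        NormedSpace.exp (t3 • se2 0 b2 c2) * NormedSpace.exp (t4 • se2 1 b1 c1)
      = gSE2 (t1 + t2 + t4)
          (-c1 * (1 - cos (t1 + t2 + t4)) + b1 * sin (t1 + t2 + t4)
            + t3 * (b2 * cos (t1 + t2) - c2 * sin (t1 + t2)))
          (b1 * (1 - cos (t1 + t2 + t4)) + c1 * sin (t1 + t2 + t4)
            + t3 * (c2 * cos (t1 + t2) + b2 * sin (t1 + t2))) := by
  rw [exp_rot, exp_rot, exp_rot, exp_trans, gSE2, gSE2, gSE2, gSE2,
    Matrix.mul_fin_three, Matrix.mul_fin_three, Matrix.mul_fin_three]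
  congr 1 <;> simp [cos_add, sin_add] <;> ring_nf <;> simp

lemma main_aux (b1 c1 d1 b2 c2 d3 θ x y z p q α β ρ t1 t2 t3 t4 : ℝ)
    (hd : d1 ≠ d3) (hb : b2 ^ 2 + c2 ^ 2 ≠ 0)
    (hp : p = x - (-c1 * (1 - cos θ) + b1 * sin θ))
    (hq : q = y - (b1 * (1 - cos θ) + c1 * sin θ))
    (hα : α = (1 / (b2 ^ 2 + c2 ^ 2)) * (b2 * p + c2 * q))
    (hβ : β = (1 / (b2 ^ 2 + c2 ^ 2)) * (-c2 * p + b2 * q))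
    (hρ : ρ = Real.sqrt (α ^ 2 + β ^ 2))
    (ht2 : t2 = (z - d1 * θ) / (d3 - d1))
    (ht1 : t1 = ang α β - t2) (ht3 : t3 = ρ) (ht4 : t4 = θ - ang α β) :
    (NormedSpace.exp (t1 • se2 1 b1 c1) * NormedSpace.exp (t2 • se2 1 b1 c1) *
        NormedSpace.exp (t3 • se2 0 b2 c2) * NormedSpace.exp (t4 • se2 1 b1 c1),
      t1 * d1 + t2 * d3 + t4 * d1) = (gSE2 θ x y, z) := by
  have hsum : t1 + t2 + t4 = θ := by rw [ht1, ht4]; ring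
  have h12 : t1 + t2 = ang α β := by rw [ht1]; ring
  have hρc : ρ * cos (ang α β) = α := by rw [hρ]; exact (polar α β).1
  have hρs : ρ * sin (ang α β) = β := by rw [hρ]; exact (polar α β).2
  have hX : t3 * (b2 * cos (t1 + t2) - c2 * sin (t1 + t2)) = p := by
    rw [h12, ht3, show ρ * (b2 * cos (ang α β) - c2 * sin (ang α β))
        = b2 * (ρ * cos (ang α β)) - c2 * (ρ * sin (ang α β)) by ring, hρc, hρs, hα, hβ]
    field_simp
    ring
  have hY : t3 * (c2 * cos (t1 + t2) + b2 * sin (t1 + t2)) = q := by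
    rw [h12, ht3, show ρ * (c2 * cos (ang α β) + b2 * sin (ang α β))
        = c2 * (ρ * cos (ang α β)) + b2 * (ρ * sin (ang α β)) by ring, hρc, hρs, hα, hβ]
    field_simp
    ring
  rw [Prod.mk.injEq]
  constructor
  · rw [FK, hsum, hX, hY, hp, hq]
    congr 1 <;> ring
  · have hdd : d3 - d1 ≠ 0 := sub_ne_zero.mpr (Ne.symm hd)
    rw [ht1, ht4, ht2]
    field_simp
    ring

/-- Inversion for T3-systems on SE(2) × ℝ: V1 = (1,b1,c1,d1), V2 = (0,b2,c2,0),
V3 = (1,b1,c1,d3); the inverse-kinematics map is a global right inverse of FK^(1,3,2,1). -/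
theorem inversion_T3_SE2R (b1 c1 d1 b2 c2 d3 : ℝ) (hd : d1 ≠ d3)
    (hb : b2 ^ 2 + c2 ^ 2 ≠ 0) (θ x y z : ℝ) :
    let p := x - (-c1 * (1 - cos θ) + b1 * sin θ)
    let q := y - (b1 * (1 - cos θ) + c1 * sin θ)
    let α := (1 / (b2 ^ 2 + c2 ^ 2)) * (b2 * p + c2 * q)
    let β := (1 / (b2 ^ 2 + c2 ^ 2)) * (-c2 * p + b2 * q)
    let ρ := Real.sqrt (α ^ 2 + β ^ 2)
    let t2 := (z - d1 * θ) / (d3 - d1)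
    let t1 := ang α β - t2
    let t3 := ρ
    let t4 := θ - ang α β
    (NormedSpace.exp (t1 • se2 1 b1 c1) * NormedSpace.exp (t2 • se2 1 b1 c1) *
        NormedSpace.exp (t3 • se2 0 b2 c2) * NormedSpace.exp (t4 • se2 1 b1 c1),
      t1 * d1 + t2 * d3 + t4 * d1) = (gSE2 θ x y, z) := by
  intro p q α β ρ t2 t1 t3 t4
  exact main_aux b1 c1 d1 b2 c2 d3 θ x y z p q α β ρ t1 t2 t3 t4 hd hb rfl rfl rfl rfl rfl rfl
    rfl rfl rfl
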